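/- In the Dyck path algebra A_q, the elements y_i ∈ e_k A_q e_k defined by the commutator relation (d_− d_+ − d_+ d_−) = (q−1)·T_1 T_2 ⋯ T_{k−1}·(−y_k) and y_i = q^{-1}·T_i·y_{i+1}·T_i pairwise commute: y_i y_j = y_j y_i for all 1 ≤ i, j ≤ k. -/

import Mathlib

/-!
At the vertex `n = k + 1` put `D = d₋d₊ − d₊d₋` and `P = T₁⋯T_{n−1}`, so `D = (1 − q) P y_n`.
The commutation of `T_i` with `d₋` and `d₊` gives `D T_i = T_{i+1} D` (`1 ≤ i ≤ n − 2`), and the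
last two relations of `𝔸_q` move `d₋d₊` and `d₊d₋` past `T₁ D`, giving `D² T_{n−1} = T₁ D²`.
Since the braid relations also give `P T_i = T_{i+1} P`, the first identity makes `y_n` commute
with `T₁, …, T_{n−2}`; the second, read through the two factorisations
`P = (T₁⋯T_{n−2}) T_{n−1} = T₁ (T₂⋯T_{n−1})`, makes `y_{n−1}` commute with `y_n`.
The rest uses only `y_i = q⁻¹ T_i y_{i+1} T_i` and the braid relations: `T_a` commutes with `y_b`
for `b > a + 1`, `T_{a+1}` commutes with `y_a`, and a descending induction on `i` shows that
`y_i` commutes with every `y_j`, `j > i`.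
-/

noncomputable section

abbrev K : Type := RatFunc ℚ

noncomputable def q : K := RatFunc.X

namespace DyckPathAlgebra

section Monoid

variable {M : Type*} [Monoid M]

def ascProd (T : ℕ → M) (n : ℕ) : M := ((List.range n).map fun i => T (i + 1)).prod

lemma ascProd_succ (T : ℕ → M) (n : ℕ) : ascProd T (n + 1) = ascProd T n * T (n + 1) :=
  List.prod_range_succ _ n

lemma ascProd_succ' (T : ℕ → M) (n : ℕ) :
    ascProd T (n + 1) = T 1 * ascProd (fun i => T (i + 1)) n :=
  List.prod_range_succ' _ n

lemma isUnit_ascProd {T : ℕ → M} {n : ℕ} (h : ∀ i, 1 ≤ i → i ≤ n → IsUnit (T i)) :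
    IsUnit (ascProd T n) := by
  induction n with
  | zero => exact isUnit_one
  | succ n ih =>
    rw [ascProd_succ]
    exact (ih fun i h₁ h₂ => h i h₁ (by omega)).mul (h _ (by omega) le_rfl)

lemma semiconjBy_ascProd_shift {x : M} {T : ℕ → M} {n : ℕ}
    (h : ∀ i, 1 ≤ i → i ≤ n → SemiconjBy x (T i) (T (i + 1))) :
    SemiconjBy x (ascProd T n) (ascProd (fun i => T (i + 1)) n) := by
  induction n with
  | zero => exact SemiconjBy.one_right x
  | succ n ih =>
    rw [ascProd_succ, ascProd_succ]
    exact (ih fun i h₁ h₂ => h i h₁ (by omega)).mul_right (h _ (by omega) le_rfl)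

lemma commute_ascProd {x : M} {T : ℕ → M} {n : ℕ} (h : ∀ i, 1 ≤ i → i ≤ n → Commute x (T i)) :
    Commute x (ascProd T n) := by
  induction n with
  | zero => exact Commute.one_right x
  | succ n ih =>
    rw [ascProd_succ]
    exact (ih fun i h₁ h₂ => h i h₁ (by omega)).mul_right (h _ (by omega) le_rfl)

/-- `T 1, …, T (n - 1)` satisfy the relations of the braid group on `n` strands. -/
structure IsBraided (T : ℕ → M) (n : ℕ) : Prop where
  braid : ∀ i, 1 ≤ i → i + 2 ≤ n → T i * (T (i + 1) * T i) = T (i + 1) * (T i * T (i + 1))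
  comm : ∀ i j, 1 ≤ i → i + 1 < j → j + 1 ≤ n → Commute (T i) (T j)

lemma IsBraided.semiconjBy_generator {T : ℕ → M} {n : ℕ} (hT : IsBraided T n) {a m : ℕ}
    (ha : 1 ≤ a) (ham : a + 1 ≤ m) (hmn : m + 1 ≤ n) :
    SemiconjBy (ascProd T m) (T a) (T (a + 1)) := by
  induction m with
  | zero => omega
  | succ m ih =>
    rcases Nat.lt_or_ge (a + 1) (m + 1) with h | h
    · rw [ascProd_succ]
      exact (ih (by omega) (by omega)).mul_left (hT.comm a (m + 1) ha h hmn).symm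
    · obtain ⟨b, rfl⟩ : ∃ b, a = b + 1 := ⟨a - 1, by omega⟩
      obtain rfl : m = b + 1 := by omega
      have hbraid : SemiconjBy (T (b + 1) * T (b + 2)) (T (b + 1)) (T (b + 2)) := by
        simpa only [SemiconjBy, mul_assoc] using hT.braid (b + 1) le_add_self hmn
      rw [ascProd_succ, ascProd_succ, mul_assoc]
      exact SemiconjBy.mul_left
        (commute_ascProd fun i _ hi => (hT.comm i (b + 2) (by omega) (by omega) hmn).symm).symm
        hbraid

lemma commute_of_semiconjBy_mul {p t t' y : M} (hp : IsUnit p) (h : SemiconjBy p t t')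
    (h' : SemiconjBy (p * y) t t') : Commute t y :=
  hp.mul_left_cancel <| by rw [← mul_assoc, h.eq, mul_assoc, ← h'.eq, mul_assoc]

lemma commute_conj_of_braid {u v y : M} (hbr : u * (v * u) = v * (u * v)) (hy : Commute u y) :
    Commute v (u * (v * (y * v) * u)) := by
  have hbr' : ∀ w, u * (v * (u * w)) = v * (u * (v * w)) := fun w => by
    simp only [← mul_assoc] at hbr ⊢; rw [hbr]
  have hy' : ∀ w, y * (u * w) = u * (y * w) := fun w => by
    rw [← mul_assoc, ← hy.eq, mul_assoc]
  show v * (u * (v * (y * v) * u)) = u * (v * (y * v) * u) * v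
  simp only [mul_assoc]
  rw [← hbr, hy', hbr']

lemma commute_conj_of_semiconjBy {t t₁ P S y z : M} (hW : IsUnit (t₁ * S * P))
    (hPt : P * t = t₁ * S) (hP : SemiconjBy (P * t) P S) (hz : z = P * t * y)
    (hzP : SemiconjBy z P S) (hzz : SemiconjBy (z * z) t t₁) :
    Commute (t * (y * t)) y := by
  have hz' : P * (t * y) = z := by rw [hz, mul_assoc]
  refine hW.mul_left_cancel ?_
  calc t₁ * S * P * (t * (y * t) * y)
      = t₁ * (S * (z * (t * y))) := by rw [← hz']; simp only [mul_assoc]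
    _ = t₁ * (z * z) := by rw [← mul_assoc S, ← hzP.eq, mul_assoc, hz']
    _ = z * z * t := hzz.eq.symm
    _ = S * z * (t * (y * t)) := by rw [← hzP.eq, ← hz']; simp only [mul_assoc]
    _ = t₁ * S * P * (y * (t * (y * t))) := by
      rw [← hPt, hP.eq, hz]; simp only [mul_assoc]

lemma IsBraided.commute_conj_of_eq_ascProd_mul {T : ℕ → M} {m : ℕ} (hT : IsBraided T (m + 2))
    (hunit : ∀ i, 1 ≤ i → i ≤ m + 1 → IsUnit (T i)) {y z : M}
    (hz : z = ascProd T (m + 1) * y)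
    (hzT : ∀ i, 1 ≤ i → i ≤ m → SemiconjBy z (T i) (T (i + 1)))
    (hzz : SemiconjBy (z * z) (T (m + 1)) (T 1)) :
    Commute (T (m + 1) * (y * T (m + 1))) y := by
  have hPt := (ascProd_succ T m).symm
  refine commute_conj_of_semiconjBy ?_ (hPt.trans (ascProd_succ' T m))
    (hPt ▸ semiconjBy_ascProd_shift fun i h₁ h₂ => hT.semiconjBy_generator h₁ (by omega) le_rfl)
    (hPt ▸ hz) (semiconjBy_ascProd_shift hzT) hzz
  exact ((hunit 1 le_rfl (by omega)).mul
    (isUnit_ascProd fun i _ _ => hunit (i + 1) (by omega) (by omega))).mul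
    (isUnit_ascProd fun i h₁ _ => hunit i h₁ (by omega))

end Monoid

section Algebra

variable {R A : Type*} [CommSemiring R] [Semiring A] [Algebra R A] {T Y : ℕ → A} {n : ℕ} {c : R}

lemma IsBraided.commute_generator_Y (hT : IsBraided T n)
    (hY : ∀ i, 1 ≤ i → i < n → Y i = c • (T i * (Y (i + 1) * T i)))
    (htop : ∀ a, 1 ≤ a → a + 2 ≤ n → Commute (T a) (Y n)) {a b : ℕ}
    (ha : 1 ≤ a) (hab : a + 1 < b) (hbn : b ≤ n) : Commute (T a) (Y b) := by
  induction hd : n - b generalizing b with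
  | zero =>
    obtain rfl : b = n := by omega
    exact htop a ha (by omega)
  | succ d ih =>
    have hTb := hT.comm a b ha hab (by omega)
    rw [hY b (by omega) (by omega)]
    exact (hTb.mul_right ((ih (by omega) (by omega) (by omega)).mul_right hTb)).smul_right c

lemma IsBraided.commute_generator_succ_Y (hT : IsBraided T n)
    (hY : ∀ i, 1 ≤ i → i < n → Y i = c • (T i * (Y (i + 1) * T i)))
    (htop : ∀ a, 1 ≤ a → a + 2 ≤ n → Commute (T a) (Y n)) {a : ℕ}
    (ha : 1 ≤ a) (han : a + 2 ≤ n) : Commute (T (a + 1)) (Y a) := by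
  rw [hY a ha (by omega), hY (a + 1) (by omega) (by omega)]
  simp only [smul_mul_assoc, mul_smul_comm]
  exact ((commute_conj_of_braid (hT.braid a ha han)
    (hT.commute_generator_Y hY htop ha (by omega) han)).smul_right c).smul_right c

lemma IsBraided.commute_Y_of_lt (hT : IsBraided T n)
    (hY : ∀ i, 1 ≤ i → i < n → Y i = c • (T i * (Y (i + 1) * T i)))
    (htop : ∀ a, 1 ≤ a → a + 2 ≤ n → Commute (T a) (Y n)) (hlast : Commute (Y (n - 1)) (Y n))
    {i j : ℕ} (hi : 1 ≤ i) (hij : i < j) (hjn : j ≤ n) : Commute (Y i) (Y j) := by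
  induction hd : n - i generalizing i j with
  | zero => omega
  | succ d ih =>
    have hfar : ∀ j, i + 2 ≤ j → j ≤ n → Commute (Y i) (Y j) := fun j h₁ h₂ => by
      have hTi := hT.commute_generator_Y hY htop hi (by omega : i + 1 < j) h₂
      rw [hY i hi (by omega)]
      exact (hTi.mul_left ((ih (by omega) (by omega) h₂ (by omega)).mul_left hTi)).smul_left c
    rcases Nat.lt_or_ge (i + 1) j with h | h
    · exact hfar j h hjn
    obtain rfl : j = i + 1 := by omega
    rcases Nat.lt_or_ge (i + 1) n with h' | h'
    · have hTi := (hT.commute_generator_succ_Y hY htop hi h').symm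
      rw [hY (i + 1) (by omega) h']
      exact (hTi.mul_right ((hfar (i + 2) le_rfl h').mul_right hTi)).smul_right c
    · obtain rfl : n = i + 1 := by omega
      exact hlast

lemma IsBraided.commute_Y_of_eq_ascProd_mul {m : ℕ} (hT : IsBraided T (m + 2))
    (hunit : ∀ i, 1 ≤ i → i ≤ m + 1 → IsUnit (T i))
    (hY : ∀ i, 1 ≤ i → i < m + 2 → Y i = c • (T i * (Y (i + 1) * T i))) {z : A}
    (hz : z = ascProd T (m + 1) * Y (m + 2))
    (hzT : ∀ i, 1 ≤ i → i ≤ m → SemiconjBy z (T i) (T (i + 1)))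
    (hzz : SemiconjBy (z * z) (T (m + 1)) (T 1)) {i j : ℕ}
    (hi : 1 ≤ i) (hin : i ≤ m + 2) (hj : 1 ≤ j) (hjn : j ≤ m + 2) : Commute (Y i) (Y j) := by
  have htop : ∀ a, 1 ≤ a → a + 2 ≤ m + 2 → Commute (T a) (Y (m + 2)) := fun a h₁ h₂ =>
    commute_of_semiconjBy_mul (isUnit_ascProd hunit)
      (hT.semiconjBy_generator h₁ (by omega) le_rfl) (hz ▸ hzT a h₁ (by omega))
  have hlast : Commute (Y (m + 1)) (Y (m + 2)) := by
    rw [hY (m + 1) (by omega) (by omega)]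
    exact (hT.commute_conj_of_eq_ascProd_mul hunit hz hzT hzz).smul_left c
  rcases lt_trichotomy i j with h | rfl | h
  · exact hT.commute_Y_of_lt hY htop hlast hi h hjn
  · exact Commute.refl _
  · exact (hT.commute_Y_of_lt hY htop hlast hj h hin).symm

end Algebra

lemma isUnit_of_hecke_relation {R A : Type*} [CommRing R] [Ring A] [Algebra R A] {q : R}
    (hq : IsUnit q) {t : A} (h : t * t = (1 - q) • t + q • 1) : IsUnit t := by
  obtain ⟨u, rfl⟩ := hq
  have h' : t * (t - (1 - (u : R)) • 1) = (u : R) • 1 := by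
    rw [mul_sub, mul_smul_comm, mul_one, h, add_sub_cancel_left]
  have h'' : (t - (1 - (u : R)) • 1) * t = (u : R) • 1 := by
    rw [sub_mul, smul_mul_assoc, one_mul, h, add_sub_cancel_left]
  refine isUnit_iff_exists.mpr ⟨(↑u⁻¹ : R) • (t - (1 - (u : R)) • 1), ?_, ?_⟩
  · rw [mul_smul_comm, h', smul_smul, Units.inv_mul, one_smul]
  · rw [smul_mul_assoc, h'', smul_smul, Units.inv_mul, one_smul]

section DyckRelations

variable {R : Type*} [CommRing R] {V : ℕ → Type*} [∀ k, AddCommGroup (V k)] [∀ k, Module R (V k)]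
  {T : ∀ k, ℕ → Module.End R (V k)} (dp : ∀ k, V k →ₗ[R] V (k + 1))
  (dm : ∀ k, V (k + 1) →ₗ[R] V k)

def dCommutator (k : ℕ) : Module.End R (V (k + 1)) := dm (k + 1) ∘ₗ dp (k + 1) - dp k ∘ₗ dm k

lemma dCommutator_apply (k : ℕ) (v : V (k + 1)) :
    dCommutator dp dm k v = dm (k + 1) (dp (k + 1) v) - dp k (dm k v) := rfl

variable {dp dm}

lemma semiconjBy_dCommutator
    (hTdm : ∀ k i, 1 ≤ i → i + 1 ≤ k → T k i ∘ₗ dm k = dm k ∘ₗ T (k + 1) i)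
    (hdpT : ∀ k i, 1 ≤ i → i + 1 ≤ k → dp k ∘ₗ T k i = T (k + 1) (i + 1) ∘ₗ dp k)
    {k i : ℕ} (hi : 1 ≤ i) (hik : i + 1 ≤ k) :
    SemiconjBy (dCommutator dp dm k) (T (k + 1) i) (T (k + 1) (i + 1)) := by
  refine LinearMap.ext fun v => ?_
  have h₁ := LinearMap.congr_fun (hTdm k i hi hik)
  have h₂ := LinearMap.congr_fun (hTdm (k + 1) (i + 1) (by omega) (by omega))
  have h₃ := LinearMap.congr_fun (hdpT k i hi hik)
  have h₄ := LinearMap.congr_fun (hdpT (k + 1) i hi (by omega))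
  simp only [LinearMap.comp_apply] at h₁ h₂ h₃ h₄
  simp only [Module.End.mul_apply, dCommutator_apply, map_sub, h₂, h₄, ← h₁, h₃]

lemma dm_dCommutator_generator {q : R}
    (hrel8 : ∀ k, dm (k + 1) ∘ₗ
        (dp (k + 1) ∘ₗ dm (k + 1) - dm (k + 2) ∘ₗ dp (k + 2)) ∘ₗ T (k + 2) (k + 1) =
      q • ((dp k ∘ₗ dm k - dm (k + 1) ∘ₗ dp (k + 1)) ∘ₗ dm (k + 1)))
    (k : ℕ) (w : V (k + 2)) :
    dm (k + 1) (dCommutator dp dm (k + 1) (T (k + 2) (k + 1) w)) =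
      q • dCommutator dp dm k (dm (k + 1) w) := by
  have := LinearMap.congr_fun (hrel8 k) w
  simp only [LinearMap.comp_apply, LinearMap.sub_apply, LinearMap.smul_apply, map_sub,
    smul_sub] at this
  simp only [dCommutator_apply, map_sub, smul_sub]
  rw [← neg_sub, this, neg_sub]

lemma generator_one_dCommutator_dp {q : R}
    (hrel9 : ∀ k, T (k + 2) 1 ∘ₗ
        (dp (k + 1) ∘ₗ dm (k + 1) - dm (k + 2) ∘ₗ dp (k + 2)) ∘ₗ dp (k + 1) =
      q • (dp (k + 1) ∘ₗ (dp k ∘ₗ dm k - dm (k + 1) ∘ₗ dp (k + 1))))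
    (k : ℕ) (w : V (k + 1)) :
    T (k + 2) 1 (dCommutator dp dm (k + 1) (dp (k + 1) w)) =
      q • dp (k + 1) (dCommutator dp dm k w) := by
  have := LinearMap.congr_fun (hrel9 k) w
  simp only [LinearMap.comp_apply, LinearMap.sub_apply, LinearMap.smul_apply, map_sub,
    smul_sub] at this
  simp only [dCommutator_apply, map_sub, smul_sub]
  rw [← neg_sub, this, neg_sub]

lemma semiconjBy_dCommutator_sq {q : R} (hq : IsUnit q)
    (hTdm : ∀ k i, 1 ≤ i → i + 1 ≤ k → T k i ∘ₗ dm k = dm k ∘ₗ T (k + 1) i)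
    (hdpT : ∀ k i, 1 ≤ i → i + 1 ≤ k → dp k ∘ₗ T k i = T (k + 1) (i + 1) ∘ₗ dp k)
    (hrel8 : ∀ k, dm (k + 1) ∘ₗ
        (dp (k + 1) ∘ₗ dm (k + 1) - dm (k + 2) ∘ₗ dp (k + 2)) ∘ₗ T (k + 2) (k + 1) =
      q • ((dp k ∘ₗ dm k - dm (k + 1) ∘ₗ dp (k + 1)) ∘ₗ dm (k + 1)))
    (hrel9 : ∀ k, T (k + 2) 1 ∘ₗ
        (dp (k + 1) ∘ₗ dm (k + 1) - dm (k + 2) ∘ₗ dp (k + 2)) ∘ₗ dp (k + 1) =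
      q • (dp (k + 1) ∘ₗ (dp k ∘ₗ dm k - dm (k + 1) ∘ₗ dp (k + 1))))
    (m : ℕ) :
    SemiconjBy (dCommutator dp dm (m + 1) * dCommutator dp dm (m + 1))
      (T (m + 2) (m + 1)) (T (m + 2) 1) := by
  set D := dCommutator dp dm (m + 1)
  have h8 : ∀ w, dm (m + 2) (dCommutator dp dm (m + 2) (T (m + 3) (m + 2) w)) =
      q • D (dm (m + 2) w) := dm_dCommutator_generator hrel8 (m + 1)
  have h9 : ∀ w, T (m + 3) 1 (dCommutator dp dm (m + 2) (dp (m + 2) w)) =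
      q • dp (m + 2) (D w) := generator_one_dCommutator_dp hrel9 (m + 1)
  have hTdm₁ := LinearMap.congr_fun (hTdm (m + 2) 1 le_rfl (by omega))
  have hdpT₁ := LinearMap.congr_fun (hdpT (m + 2) (m + 1) (by omega) le_rfl)
  simp only [LinearMap.comp_apply] at hTdm₁ hdpT₁
  refine LinearMap.ext fun v => (hq.smul_left_cancel).mp ?_
  have hdmdp : q • T (m + 2) 1 (D (dm (m + 2) (dp (m + 2) v))) =
      q • dm (m + 2) (dp (m + 2) (D (T (m + 2) (m + 1) v))) := by
    rw [← map_smul, ← h8, hTdm₁, ← hdpT₁, h9, map_smul]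
  have hdpdm : q • T (m + 2) 1 (D (dp (m + 1) (dm (m + 1) v))) =
      q • dp (m + 1) (dm (m + 1) (D (T (m + 2) (m + 1) v))) := by
    rw [generator_one_dCommutator_dp hrel9, dm_dCommutator_generator hrel8, map_smul]
  simp only [Module.End.mul_apply]
  rw [dCommutator_apply dp dm (m + 1) (D _), dCommutator_apply dp dm (m + 1) v,
    map_sub, map_sub, smul_sub, smul_sub, hdmdp, hdpdm]

end DyckRelations

lemma foldr_comp_range_eq_ascProd {R M : Type*} [Semiring R] [AddCommMonoid M] [Module R M]
    (T : ℕ → Module.End R M) (n : ℕ) :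
    (List.range n).foldr (fun i f => T (i + 1) ∘ₗ f) LinearMap.id = ascProd T n := by
  rw [ascProd, List.prod_eq_foldr, List.foldr_map]
  rfl

end DyckPathAlgebra

open DyckPathAlgebra

lemma one_sub_q_ne_zero : (1 : K) - q ≠ 0 :=
  sub_ne_zero.mpr fun h => Polynomial.X_ne_C (1 : ℚ) <|
    RatFunc.algebraMap_injective ℚ (by simpa [q] using h.symm)

theorem dyck_path_algebra_y_commute_general
    (V : ℕ → Type) [∀ k, AddCommGroup (V k)] [∀ k, Module K (V k)]
    (T : ∀ k : ℕ, ℕ → (V k →ₗ[K] V k))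
    (dp : ∀ k : ℕ, V k →ₗ[K] V (k + 1))
    (dm : ∀ k : ℕ, V (k + 1) →ₗ[K] V k)
    -- (T_i − 1)(T_i + q) = 0
    (hquad : ∀ k i, 1 ≤ i → i + 1 ≤ k →
      (T k i) ∘ₗ (T k i) = (1 - q) • T k i + q • LinearMap.id)
    -- braid relations
    (hbraid : ∀ k i, 1 ≤ i → i + 2 ≤ k →
      (T k i) ∘ₗ (T k (i + 1)) ∘ₗ (T k i) = (T k (i + 1)) ∘ₗ (T k i) ∘ₗ (T k (i + 1)))
    -- T_i T_j = T_j T_i for |i − j| > 1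
    (hcomm : ∀ k i j, 1 ≤ i → i + 1 ≤ k → 1 ≤ j → j + 1 ≤ k → i + 1 < j →
      (T k i) ∘ₗ (T k j) = (T k j) ∘ₗ (T k i))
    -- T_i d₋ = d₋ T_i
    (hTdm : ∀ k i, 1 ≤ i → i + 1 ≤ k →
      (T k i) ∘ₗ (dm k) = (dm k) ∘ₗ (T (k + 1) i))
    -- d₊ T_i = T_{i+1} d₊
    (hdpT : ∀ k i, 1 ≤ i → i + 1 ≤ k →
      (dp k) ∘ₗ (T k i) = (T (k + 1) (i + 1)) ∘ₗ (dp k))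
    -- d₋ (d₊d₋ − d₋d₊) T_{k−1} = q (d₊d₋ − d₋d₊) d₋  (k ≥ 2)
    (hrel8 : ∀ k, (dm (k + 1)) ∘ₗ
        ((dp (k + 1)) ∘ₗ (dm (k + 1)) - (dm (k + 2)) ∘ₗ (dp (k + 2))) ∘ₗ
          (T (k + 2) (k + 1)) =
      q • (((dp k) ∘ₗ (dm k) - (dm (k + 1)) ∘ₗ (dp (k + 1))) ∘ₗ (dm (k + 1))))
    -- T_1 (d₊d₋ − d₋d₊) d₊ = q d₊ (d₊d₋ − d₋d₊)  (k ≥ 1)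
    (hrel9 : ∀ k, (T (k + 2) 1) ∘ₗ
        ((dp (k + 1)) ∘ₗ (dm (k + 1)) - (dm (k + 2)) ∘ₗ (dp (k + 2))) ∘ₗ (dp (k + 1)) =
      q • ((dp (k + 1)) ∘ₗ ((dp k) ∘ₗ (dm k) - (dm (k + 1)) ∘ₗ (dp (k + 1)))))
    -- the elements y_i at the vertex k+1
    (k : ℕ) (Y : ℕ → (V (k + 1) →ₗ[K] V (k + 1)))
    -- (d₋d₊ − d₊d₋) = (q−1)·T₁⋯T_k·(−y_{k+1})   [vertex k+1]
    (hYtop : (dm (k + 1)) ∘ₗ (dp (k + 1)) - (dp k) ∘ₗ (dm k) =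
      (q - 1) • (((List.range k).foldr
          (fun i f => (T (k + 1) (i + 1)) ∘ₗ f) LinearMap.id) ∘ₗ (-(Y (k + 1)))))
    -- y_i = q⁻¹ T_i y_{i+1} T_i
    (hYrec : ∀ i, 1 ≤ i → i ≤ k →
      Y i = q⁻¹ • ((T (k + 1) i) ∘ₗ (Y (i + 1)) ∘ₗ (T (k + 1) i))) :
    ∀ i j, 1 ≤ i → i ≤ k + 1 → 1 ≤ j → j ≤ k + 1 →
      (Y i) ∘ₗ (Y j) = (Y j) ∘ₗ (Y i) := by
  intro i j hi hik hj hjk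
  obtain _ | m := k
  · obtain rfl : i = 1 := by omega
    obtain rfl : j = 1 := by omega
    rfl
  have hq : IsUnit q := isUnit_iff_ne_zero.mpr RatFunc.X_ne_zero
  have hT : IsBraided (T (m + 2)) (m + 2) :=
    ⟨fun i h₁ h₂ => hbraid _ i h₁ h₂,
      fun i j h₁ h₂ h₃ => hcomm _ i j h₁ (by omega) (by omega) h₃ h₂⟩
  have hz : ascProd (T (m + 2)) (m + 1) * Y (m + 2) =
      ((1 : K) - q)⁻¹ • dCommutator dp dm (m + 1) := by
    rw [dCommutator, hYtop, foldr_comp_range_eq_ascProd, ← Module.End.mul_eq_comp, mul_neg,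
      smul_neg, ← neg_smul, neg_sub, inv_smul_smul₀ one_sub_q_ne_zero]
  refine hT.commute_Y_of_eq_ascProd_mul
    (fun i h₁ h₂ => isUnit_of_hecke_relation hq (hquad _ i h₁ (by omega)))
    (fun i h₁ h₂ => hYrec i h₁ (by omega)) hz.symm
    (fun i h₁ h₂ => (semiconjBy_dCommutator hTdm hdpT h₁ (by omega)).smul_left _) ?_ hi hik hj hjk
  rw [smul_mul_smul_comm]
  exact (semiconjBy_dCommutator_sq hq hTdm hdpT hrel8 hrel9 m).smul_left _

theorem dyck_path_algebra_y_commute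
    (V : ℕ → Type) [∀ k, AddCommGroup (V k)] [∀ k, Module K (V k)]
    (T : ∀ k : ℕ, ℕ → (V k →ₗ[K] V k))
    (dp : ∀ k : ℕ, V k →ₗ[K] V (k + 1))
    (dm : ∀ k : ℕ, V (k + 1) →ₗ[K] V k)
    -- (T_i − 1)(T_i + q) = 0
    (hquad : ∀ k i, 1 ≤ i → i + 1 ≤ k →
      (T k i) ∘ₗ (T k i) = (1 - q) • T k i + q • LinearMap.id)
    -- braid relations
    (hbraid : ∀ k i, 1 ≤ i → i + 2 ≤ k →
      (T k i) ∘ₗ (T k (i + 1)) ∘ₗ (T k i) = (T k (i + 1)) ∘ₗ (T k i) ∘ₗ (T k (i + 1)))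
    -- T_i T_j = T_j T_i for |i − j| > 1
    (hcomm : ∀ k i j, 1 ≤ i → i + 1 ≤ k → 1 ≤ j → j + 1 ≤ k → i + 1 < j →
      (T k i) ∘ₗ (T k j) = (T k j) ∘ₗ (T k i))
    -- T_i d₋ = d₋ T_i
    (hTdm : ∀ k i, 1 ≤ i → i + 1 ≤ k →
      (T k i) ∘ₗ (dm k) = (dm k) ∘ₗ (T (k + 1) i))
    -- d₊ T_i = T_{i+1} d₊
    (hdpT : ∀ k i, 1 ≤ i → i + 1 ≤ k →
      (dp k) ∘ₗ (T k i) = (T (k + 1) (i + 1)) ∘ₗ (dp k))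
    -- T_1 d₊² = d₊²
    (hT1dp : ∀ k, (T (k + 2) 1) ∘ₗ ((dp (k + 1)) ∘ₗ (dp k)) = (dp (k + 1)) ∘ₗ (dp k))
    -- d₋² T_{k−1} = d₋²
    (hdmT : ∀ k, ((dm k) ∘ₗ (dm (k + 1))) ∘ₗ (T (k + 2) (k + 1)) = (dm k) ∘ₗ (dm (k + 1)))
    -- d₋ (d₊d₋ − d₋d₊) T_{k−1} = q (d₊d₋ − d₋d₊) d₋  (k ≥ 2)
    (hrel8 : ∀ k, (dm (k + 1)) ∘ₗ
        ((dp (k + 1)) ∘ₗ (dm (k + 1)) - (dm (k + 2)) ∘ₗ (dp (k + 2))) ∘ₗ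
          (T (k + 2) (k + 1)) =
      q • (((dp k) ∘ₗ (dm k) - (dm (k + 1)) ∘ₗ (dp (k + 1))) ∘ₗ (dm (k + 1))))
    -- T_1 (d₊d₋ − d₋d₊) d₊ = q d₊ (d₊d₋ − d₋d₊)  (k ≥ 1)
    (hrel9 : ∀ k, (T (k + 2) 1) ∘ₗ
        ((dp (k + 1)) ∘ₗ (dm (k + 1)) - (dm (k + 2)) ∘ₗ (dp (k + 2))) ∘ₗ (dp (k + 1)) =
      q • ((dp (k + 1)) ∘ₗ ((dp k) ∘ₗ (dm k) - (dm (k + 1)) ∘ₗ (dp (k + 1)))))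
    -- the elements y_i at the vertex k+1
    (k : ℕ) (Y : ℕ → (V (k + 1) →ₗ[K] V (k + 1)))
    -- (d₋d₊ − d₊d₋) = (q−1)·T₁⋯T_k·(−y_{k+1})   [vertex k+1]
    (hYtop : (dm (k + 1)) ∘ₗ (dp (k + 1)) - (dp k) ∘ₗ (dm k) =
      (q - 1) • (((List.range k).foldr
          (fun i f => (T (k + 1) (i + 1)) ∘ₗ f) LinearMap.id) ∘ₗ (-(Y (k + 1)))))
    -- y_i = q⁻¹ T_i y_{i+1} T_i
    (hYrec : ∀ i, 1 ≤ i → i ≤ k →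
      Y i = q⁻¹ • ((T (k + 1) i) ∘ₗ (Y (i + 1)) ∘ₗ (T (k + 1) i))) :
    ∀ i j, 1 ≤ i → i ≤ k + 1 → 1 ≤ j → j ≤ k + 1 →
      (Y i) ∘ₗ (Y j) = (Y j) ∘ₗ (Y i) :=
  dyck_path_algebra_y_commute_general V T dp dm hquad hbraid hcomm hTdm hdpT hrel8 hrel9 k Y hYtop
    hYrec

end
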